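/- Let G be a graph with m edges and adjacency matrix A. If G admits an orientation D such that H_{π/3}(D) has spectrum symmetric about 0, then trace(A³) ≤ −18·m·λ_min(A), where λ_min(A) is the least eigenvalue of A. -/

import Mathlib

/-!
Let `K` be the skew-symmetric `±1` matrix of the orientation, so that `2H = A + i √3 K`.
A spectrum symmetric about `0` forces `tr H³ = 0`, and the real part of `tr (A + i √3 K)³` is
`tr A³ - 9 tr (A K²)`; hence `tr A³ = 9 tr (A K²) = -9 tr (A K Kᵀ)`. The matrix `K Kᵀ` is
positive semidefinite with the degrees on its diagonal, so
`tr (A K Kᵀ) ≥ λ_min(A) tr (K Kᵀ) = 2 m λ_min(A)`.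
-/

open Matrix Finset

namespace Matrix

variable {ι : Type*} [Fintype ι] [DecidableEq ι]

theorem IsHermitian.trace_pow_eq_sum_eigenvalues_pow {𝕜 : Type*} [RCLike 𝕜]
    {A : Matrix ι ι 𝕜} (hA : A.IsHermitian) (k : ℕ) :
    (A ^ k).trace = ∑ i, ((hA.eigenvalues i ^ k : ℝ) : 𝕜) := by
  conv_lhs => rw [hA.spectral_theorem]
  rw [← map_pow, Unitary.conjStarAlgAut_apply, trace_mul_cycle, Unitary.coe_star_mul_self,
    one_mul, diagonal_pow, trace_diagonal]
  simp

theorem IsHermitian.trace_pow_eq_zero_of_eigenvalues_comp_perm_eq_neg {𝕜 : Type*} [RCLike 𝕜]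
    {A : Matrix ι ι 𝕜} (hA : A.IsHermitian) (σ : Equiv.Perm ι)
    (hσ : ∀ i, hA.eigenvalues (σ i) = -hA.eigenvalues i) {k : ℕ} (hk : Odd k) :
    (A ^ k).trace = 0 := by
  have hsum : ∑ i, hA.eigenvalues i ^ k = 0 := by
    have h := Equiv.sum_comp σ fun i ↦ hA.eigenvalues i ^ k
    simp only [hσ, hk.neg_pow, Finset.sum_neg_distrib, neg_eq_iff_add_eq_zero] at h
    linarith
  rw [hA.trace_pow_eq_sum_eigenvalues_pow, ← RCLike.ofReal_sum, hsum, RCLike.ofReal_zero]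

theorem IsHermitian.iInf_eigenvalues_mul_trace_le_trace_mul {A M : Matrix ι ι ℝ}
    (hA : A.IsHermitian) (hM : M.PosSemidef) :
    (⨅ i, hA.eigenvalues i) * M.trace ≤ (A * M).trace := by
  set U : Matrix ι ι ℝ := (hA.eigenvectorUnitary : Matrix ι ι ℝ) with hU
  have hN : (Uᴴ * M * U).PosSemidef := hM.conjTranspose_mul_mul_same U
  have hUU : U * star U = 1 := mem_unitaryGroup_iff.mp hA.eigenvectorUnitary.2
  have htrace_N : (Uᴴ * M * U).trace = M.trace := by
    rw [trace_mul_cycle, ← star_eq_conjTranspose, hUU, one_mul]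
  have htrace_AM : (A * M).trace = ∑ i, hA.eigenvalues i * (Uᴴ * M * U) i i := by
    conv_lhs => rw [hA.spectral_theorem, Unitary.conjStarAlgAut_apply, ← hU]
    rw [Matrix.mul_assoc, Matrix.mul_assoc, trace_mul_comm]
    simp [trace, diagonal_mul, Matrix.mul_assoc, star_eq_conjTranspose]
  rw [htrace_AM, ← htrace_N, trace, Finset.mul_sum]
  exact Finset.sum_le_sum fun i _ ↦ mul_le_mul_of_nonneg_right
    (ciInf_le (Set.finite_range _).bddBelow i) (hN.diag_nonneg)

theorem re_trace_add_I_smul_pow_three (A B : Matrix ι ι ℝ) :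
    ((A.map Complex.ofReal + Complex.I • B.map Complex.ofReal) ^ 3).trace.re =
      (A ^ 3).trace - 3 * (A * B * B).trace := by
  let φ := Complex.ofRealHom.mapMatrix (m := ι)
  have hexp : (φ A + Complex.I • φ B) ^ 3 = φ (A ^ 3 - (A * B * B + B * A * B + B * B * A)) +
      Complex.I • φ (A * A * B + A * B * A + B * A * A - B * B * B) := by
    simp only [map_sub, map_add, map_mul, map_pow]
    noncomm_ring
    simp only [smul_add, smul_smul, Complex.I_mul_I]
    module
  have re_trace_φ (X : Matrix ι ι ℝ) : (φ X).trace.re = X.trace := by simp [φ, trace]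
  have re_trace_I_smul_φ (X : Matrix ι ι ℝ) : (Complex.I • φ X).trace.re = 0 := by
    simp [φ, trace]
  change ((φ A + Complex.I • φ B) ^ 3).trace.re = _
  rw [hexp, trace_add, Complex.add_re, re_trace_φ, re_trace_I_smul_φ, trace_sub, trace_add,
    trace_add, trace_mul_cycle B A B, trace_mul_cycle B B A]
  ring

end Matrix

theorem Complex.exp_pi_div_three_mul_I :
    Complex.exp ((Real.pi / 3 : ℝ) * Complex.I) = (1 + Real.sqrt 3 * Complex.I) / 2 := by
  rw [Complex.exp_mul_I, ← Complex.ofReal_cos, ← Complex.ofReal_sin, Real.cos_pi_div_three,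
    Real.sin_pi_div_three]
  push_cast
  ring

theorem Complex.exp_neg_pi_div_three_mul_I :
    Complex.exp (-((Real.pi / 3 : ℝ) * Complex.I)) = (1 - Real.sqrt 3 * Complex.I) / 2 := by
  rw [← neg_mul, ← Complex.ofReal_neg, Complex.exp_mul_I, ← Complex.ofReal_cos,
    ← Complex.ofReal_sin, Real.cos_neg, Real.sin_neg, Real.cos_pi_div_three,
    Real.sin_pi_div_three]
  push_cast
  ring

namespace SimpleGraph

variable {V : Type*} (R : Type*) [Ring R]

def skewAdjMatrix (arc : V → V → Prop) [DecidableRel arc] : Matrix V V R :=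
  of fun u v ↦ if arc u v then 1 else if arc v u then -1 else 0

variable {R} {G : SimpleGraph V} [DecidableRel G.Adj] {arc : V → V → Prop} [DecidableRel arc]

theorem transpose_skewAdjMatrix (hasym : ∀ u v, arc u v → ¬ arc v u) :
    (skewAdjMatrix R arc)ᵀ = -skewAdjMatrix R arc := by
  ext u v
  by_cases huv : arc u v
  · simp [skewAdjMatrix, huv, hasym u v huv]
  · by_cases hvu : arc v u <;> simp [skewAdjMatrix, huv, hvu]

theorem skewAdjMatrix_apply_mul_self (horient : ∀ u v, G.Adj u v ↔ (arc u v ∨ arc v u))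
    (u v : V) : skewAdjMatrix R arc u v * skewAdjMatrix R arc u v = G.adjMatrix R u v := by
  by_cases huv : arc u v
  · simp [skewAdjMatrix, huv, horient]
  · by_cases hvu : arc v u <;> simp [skewAdjMatrix, huv, hvu, horient]

theorem trace_skewAdjMatrix_mul_transpose [Fintype V]
    (horient : ∀ u v, G.Adj u v ↔ (arc u v ∨ arc v u)) :
    (skewAdjMatrix R arc * (skewAdjMatrix R arc)ᵀ).trace = 2 * (#G.edgeFinset : R) := by
  have hrow (u : V) : ∑ v, G.adjMatrix R u v = G.degree u := by
    simp [← card_neighborFinset_eq_degree, neighborFinset_eq_filter]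
  simp only [trace, Matrix.diag, mul_apply, transpose_apply, skewAdjMatrix_apply_mul_self horient,
    hrow]
  rw [← Nat.cast_sum, G.sum_degrees_eq_twice_card_edges, Nat.cast_mul, Nat.cast_ofNat]

theorem eq_half_smul_adjMatrix_add_I_smul_skewAdjMatrix
    (horient : ∀ u v, G.Adj u v ↔ (arc u v ∨ arc v u)) {H : Matrix V V ℂ}
    (hH : ∀ u v, H u v =
      if arc u v then Complex.exp ((Real.pi / 3 : ℝ) * Complex.I)
      else if arc v u then Complex.exp (-((Real.pi / 3 : ℝ) * Complex.I)) else 0) :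
    H = (1 / 2 : ℂ) • ((G.adjMatrix ℝ).map Complex.ofReal +
      Complex.I • (Real.sqrt 3 • skewAdjMatrix ℝ arc).map Complex.ofReal) := by
  ext u v
  simp only [hH, Complex.exp_pi_div_three_mul_I, Complex.exp_neg_pi_div_three_mul_I,
    skewAdjMatrix, of_apply, Matrix.smul_apply, Matrix.add_apply, map_apply, adjMatrix_apply,
    horient, smul_eq_mul]
  split_ifs <;> first | tauto | (push_cast; ring)

end SimpleGraph

/-- If a graph `G` with `m` edges and adjacency matrix `A` admits an orientation
whose Hermitian adjacency matrix `H_{π/3}` has spectrum symmetric about 0, then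
`trace (A ^ 3) ≤ -18 m λ_min(A)`. -/
theorem stmt_14 (n : ℕ) (G : SimpleGraph (Fin n)) [DecidableRel G.Adj]
    (hA : (G.adjMatrix ℝ).IsHermitian)
    (arc : Fin n → Fin n → Prop) [DecidableRel arc]
    (hasym : ∀ u v, arc u v → ¬ arc v u)
    (horient : ∀ u v, G.Adj u v ↔ (arc u v ∨ arc v u))
    (H : Matrix (Fin n) (Fin n) ℂ)
    (hH : ∀ u v, H u v =
      if arc u v then Complex.exp ((Real.pi / 3 : ℝ) * Complex.I)
      else if arc v u then Complex.exp (-((Real.pi / 3 : ℝ) * Complex.I)) else 0)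
    (hHerm : H.IsHermitian)
    (hsym : ∃ σ : Equiv.Perm (Fin n), ∀ i, hHerm.eigenvalues (σ i) = - hHerm.eigenvalues i) :
    Matrix.trace ((G.adjMatrix ℝ) ^ 3)
      ≤ -18 * (G.edgeFinset.card : ℝ) * (⨅ i, hA.eigenvalues i) := by
  set A := G.adjMatrix ℝ
  set K := SimpleGraph.skewAdjMatrix ℝ arc
  obtain ⟨σ, hσ⟩ := hsym
  have htrace_H : (H ^ 3).trace = 0 :=
    hHerm.trace_pow_eq_zero_of_eigenvalues_comp_perm_eq_neg σ hσ (by decide)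
  have htrace_A : (A ^ 3).trace = 9 * (A * K * K).trace := by
    rw [SimpleGraph.eq_half_smul_adjMatrix_add_I_smul_skewAdjMatrix horient hH, smul_pow,
      trace_smul, smul_eq_mul, mul_eq_zero] at htrace_H
    have h := re_trace_add_I_smul_pow_three A (Real.sqrt 3 • K)
    rw [htrace_H.resolve_left (by norm_num), Complex.zero_re] at h
    simp only [Matrix.smul_mul, Matrix.mul_smul, trace_smul, smul_eq_mul, smul_smul,
      Real.mul_self_sqrt (show (0 : ℝ) ≤ 3 by norm_num)] at h
    linarith
  have hAKK : A * K * K = -(A * (K * Kᵀ)) := by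
    rw [SimpleGraph.transpose_skewAdjMatrix hasym, Matrix.mul_neg, Matrix.mul_neg, neg_neg,
      Matrix.mul_assoc]
  have hineq := hA.iInf_eigenvalues_mul_trace_le_trace_mul (posSemidef_self_mul_conjTranspose K)
  rw [conjTranspose_eq_transpose_of_trivial,
    SimpleGraph.trace_skewAdjMatrix_mul_transpose horient] at hineq
  rw [htrace_A, hAKK, trace_neg]
  linarith
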